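/- Let k ≥ 1, and let 0 < r < r'. Let F : ℂ^k → ℂ be holomorphic on the polydisc {|z_i| < r' for all i} and symmetric under all permutations of its arguments. Let f be holomorphic on {s ∈ ℂ : 0 < |s| < 2r'} with a simple pole at s = 0 of residue 1 (i.e. f(s) − 1/s extends holomorphically to |s| < 2r'). Set K(z_1,…,z_k) = F(z_1,…,z_k) ∏_{1 ≤ i ≤ j ≤ k} f(z_i + z_j). Let α_1,…,α_k ∈ ℂ satisfy 0 < |α_j| < r for all j and α_i + α_j ≠ 0, α_i − α_j ≠ 0 whenever i ≠ j. Then Σ_{ε ∈ {−1,1}^k} K(ε_1 α_1, …, ε_k α_k) = ((−1)^{k(k−1)/2} 2^k)/(k! (2πi)^k) · ∮_{|z_1|=r} ⋯ ∮_{|z_k|=r} K(z_1,…,z_k) · Δ(z_1²,…,z_k²)² · (∏_{i=1}^k z_i) / ∏_{i=1}^k ∏_{j=1}^k ((z_i − α_j)(z_i + α_j)) dz_1 ⋯ dz_k, where the contours are the counterclockwise circles of radius r centred at 0. -/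

import Mathlib

open Finset

/-- The `k`-fold iterated contour integral over counterclockwise circles of
radius `r` centred at `0`, one in each variable. -/
noncomputable def iterCircleIntegral : (k : ℕ) → ((Fin k → ℂ) → ℂ) → ℝ → ℂ
  | 0, f, _ => f (fun i => i.elim0)
  | (k + 1), f, r => ∮ z in C(0, r), iterCircleIntegral k (fun w => f (Fin.cons z w)) r

/-!
Write `f s = (1 + s h(s)) / s`. Since
`∏_{i ≤ j} (z_i + z_j) · Δ(z) Δ(z²) = 2^k ∏ z_i · Δ(z²)²`, the poles of `K` cancel and on the
torus the integrand is `2^{-k} N(z) ∏_i Q(z_i)`, where `N` is symmetric and holomorphic on the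
polydisc and `Q(z) = 1 / ∏_j (z² - α_j²)`. Partial fractions and Cauchy's formula evaluate each
circle integral as a sum of residues at the `2k` poles `±α_j`, so the iterated integral is a sum
over all assignments of poles to the variables. The factor `Δ(z²)` of `N` kills every assignment
that does not use each pair `±α_j` exactly once; by symmetry the others give `k!` copies of the
sum over sign vectors, and at `z = (ε_j α_j)_j` the residue weights reduce the term to
`(-1)^{k(k-1)/2} 2^{-k} K(z)`.
-/

open Metric Complex Lagrange
open scoped Real

section PairProducts

variable {ι M : Type*} [Fintype ι] [LinearOrder ι] [CommMonoid M]

theorem prod_filter_lt_comp_perm {ψ : ι → ι → M} (hψ : ∀ i j, ψ i j = ψ j i)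
    (σ : Equiv.Perm ι) :
    ∏ p ∈ univ.filter (fun p : ι × ι => p.1 < p.2), ψ (σ p.1) (σ p.2)
      = ∏ p ∈ univ.filter (fun p : ι × ι => p.1 < p.2), ψ p.1 p.2 := by
  let sort (τ : Equiv.Perm ι) (p : ι × ι) : ι × ι :=
    if τ p.1 < τ p.2 then (τ p.1, τ p.2) else (τ p.2, τ p.1)
  refine prod_nbij' (sort σ) (sort σ.symm) ?_ ?_ ?_ ?_ ?_ <;>
    simp only [sort, mem_filter, mem_univ, true_and] <;>
    intro p <;> split_ifs <;> grind [Equiv.apply_eq_iff_eq]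

theorem prod_filter_le_eq_prod_diag_mul (g : ι × ι → M) :
    ∏ p ∈ univ.filter (fun p : ι × ι => p.1 ≤ p.2), g p
      = (∏ i, g (i, i)) * ∏ p ∈ univ.filter (fun p : ι × ι => p.1 < p.2), g p := by
  have hdiag : ∏ i, g (i, i) = ∏ p ∈ univ.filter (fun p : ι × ι => p.1 = p.2), g p := by
    rw [prod_filter, Fintype.prod_prod_type]
    simp [prod_ite_eq]
  rw [hdiag, prod_filter, prod_filter, prod_filter, ← prod_mul_distrib]
  refine prod_congr rfl fun p _ => ?_
  split_ifs <;> grind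

theorem prod_filter_le_comp_perm {ψ : ι → ι → M} (hψ : ∀ i j, ψ i j = ψ j i)
    (σ : Equiv.Perm ι) :
    ∏ p ∈ univ.filter (fun p : ι × ι => p.1 ≤ p.2), ψ (σ p.1) (σ p.2)
      = ∏ p ∈ univ.filter (fun p : ι × ι => p.1 ≤ p.2), ψ p.1 p.2 := by
  rw [prod_filter_le_eq_prod_diag_mul, prod_filter_le_eq_prod_diag_mul,
    prod_filter_lt_comp_perm hψ, Equiv.prod_comp σ fun i => ψ i i]

theorem prod_prod_erase_eq_prod_filter_lt_mul (g : ι × ι → M) :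
    ∏ i, ∏ j ∈ univ.erase i, g (i, j)
      = (∏ p ∈ univ.filter (fun p : ι × ι => p.1 < p.2), g p) *
        ∏ p ∈ univ.filter (fun p : ι × ι => p.1 < p.2), g p.swap := by
  have hswap : ∏ p ∈ univ.filter (fun p : ι × ι => p.1 < p.2), g p.swap
      = ∏ p ∈ univ.filter (fun p : ι × ι => p.2 < p.1), g p := by
    rw [prod_filter, prod_filter]
    exact Fintype.prod_equiv (Equiv.prodComm ι ι) _ _ fun _ => rfl
  simp_rw [hswap, ← filter_ne', prod_filter, ← prod_mul_distrib]
  rw [← Fintype.prod_prod_type' (fun i j => if j ≠ i then g (i, j) else 1)]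
  refine prod_congr rfl fun p _ => ?_
  split_ifs <;> grind

end PairProducts

/-- The Vandermonde product `Δ` of the paper. -/
def vandermondeProd {ι R : Type*} [Fintype ι] [LinearOrder ι] [CommRing R] (x : ι → R) : R :=
  ∏ p ∈ univ.filter (fun p : ι × ι => p.1 < p.2), (x p.2 - x p.1)

section Vandermonde

variable {ι R : Type*} [Fintype ι] [LinearOrder ι] [CommRing R]

theorem vandermondeProd_eq_zero {x : ι → R} {i j : ι} (hij : i ≠ j) (h : x i = x j) :
    vandermondeProd x = 0 := by
  rcases hij.lt_or_gt with hlt | hlt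
  · exact prod_eq_zero (i := (i, j)) (by simpa using hlt) (by simp [h])
  · exact prod_eq_zero (i := (j, i)) (by simpa using hlt) (by simp [h])

theorem vandermondeProd_ne_zero [IsDomain R] {x : ι → R} (hx : Function.Injective x) :
    vandermondeProd x ≠ 0 :=
  prod_ne_zero_iff.2 fun _ hp => sub_ne_zero.2 <| hx.ne (mem_filter.1 hp).2.ne'

theorem prod_prod_erase_sub_eq_vandermondeProd_sq (x : ι → R) :
    ∏ i, ∏ j ∈ univ.erase i, (x i - x j)
      = (-1) ^ (Fintype.card ι).choose 2 * vandermondeProd x ^ 2 := by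
  rw [prod_prod_erase_eq_prod_filter_lt_mul (fun p => x p.1 - x p.2), vandermondeProd,
    ← Fintype.card_product_filter_lt]
  simp only [Prod.fst_swap, Prod.snd_swap, ← neg_sub (x (Prod.snd _)), prod_neg]
  ring

theorem prod_filter_le_add_mul_vandermondeProd (x : ι → R) :
    (∏ p ∈ univ.filter (fun p : ι × ι => p.1 ≤ p.2), (x p.1 + x p.2)) *
        (vandermondeProd x * vandermondeProd (x ^ 2))
      = 2 ^ Fintype.card ι * (∏ i, x i) * vandermondeProd (x ^ 2) ^ 2 := by
  have hdiag : ∏ i, (x i + x i) = 2 ^ Fintype.card ι * ∏ i, x i := by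
    simp [← two_mul, prod_mul_distrib]
  have hoff : (∏ p ∈ univ.filter (fun p : ι × ι => p.1 < p.2), (x p.1 + x p.2)) *
      vandermondeProd x = vandermondeProd (x ^ 2) := by
    rw [vandermondeProd, vandermondeProd, ← prod_mul_distrib]
    exact prod_congr rfl fun p _ => by simp only [Pi.pow_apply]; ring
  rw [prod_filter_le_eq_prod_diag_mul, hdiag, ← hoff]
  ring

end Vandermonde

def pole {ι R : Type*} [Neg R] (α : ι → R) (t : ι × Bool) : R := if t.2 then α t.1 else -α t.1

section Poles

variable {ι R : Type*} [Field R] {α : ι → R}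

theorem pole_sq (t : ι × Bool) : pole α t ^ 2 = α t.1 ^ 2 := by
  unfold pole; split_ifs <;> ring

theorem pole_ne_zero (hα : ∀ j, α j ≠ 0) (t : ι × Bool) : pole α t ≠ 0 := by
  unfold pole; split_ifs <;> simp [hα]

theorem pole_injective [NeZero (2 : R)] (hα : ∀ j, α j ≠ 0)
    (hα' : ∀ i j, i ≠ j → α i + α j ≠ 0 ∧ α i - α j ≠ 0) : Function.Injective (pole α) := by
  rintro ⟨i, a⟩ ⟨j, b⟩ hab
  have h2 : (2 : R) * α i ≠ 0 := mul_ne_zero two_ne_zero (hα i)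
  have hij := hα' i j
  cases a <;> cases b <;> simp only [pole, if_true, Bool.false_eq_true, if_false] at hab <;>
    by_cases i = j <;> grind

theorem prod_sub_pole [Fintype ι] (z : R) :
    ∏ t, (z - pole α t) = ∏ j, ((z - α j) * (z + α j)) := by
  simp [Fintype.prod_prod_type, pole]

open Polynomial in
theorem nodal_pole [Fintype ι] :
    nodal univ (pole α) = (nodal univ (fun j => α j ^ 2)).comp (X ^ 2) := by
  simp only [nodal, Polynomial.prod_comp, sub_comp, X_comp, C_comp, Fintype.prod_prod_type,
    Fintype.prod_bool, pole]
  refine prod_congr rfl fun j _ => ?_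
  simp only [if_true, Bool.false_eq_true, if_false, C_neg, C_pow]
  ring

open Polynomial in
theorem nodalWeight_pole [Fintype ι] [DecidableEq ι] (t : ι × Bool) :
    nodalWeight univ (pole α) t = nodalWeight univ (fun j => α j ^ 2) t.1 * (2 * pole α t)⁻¹ := by
  rw [nodalWeight_eq_eval_derivative_nodal (mem_univ _), nodal_pole, derivative_comp,
    nodalWeight_eq_eval_derivative_nodal (mem_univ _)]
  simp only [eval_mul, eval_comp, eval_pow, eval_X, derivative_X_pow, pole_sq, eval_C]
  norm_num [mul_inv, mul_comm]

theorem prod_nodalWeight_pole [Fintype ι] [LinearOrder ι] (ε : ι → Bool) :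
    ∏ j, nodalWeight univ (pole α) (j, ε j)
      = ((-1) ^ (Fintype.card ι).choose 2 * vandermondeProd (fun j => α j ^ 2) ^ 2 *
          (2 ^ Fintype.card ι * ∏ j, pole α (j, ε j)))⁻¹ := by
  rw [prod_congr rfl fun j _ => nodalWeight_pole (j, ε j), prod_mul_distrib]
  simp only [nodalWeight, prod_inv_distrib]
  rw [prod_prod_erase_sub_eq_vandermondeProd_sq (fun j => α j ^ 2), prod_mul_distrib, prod_const,
    card_univ]
  ring

end Poles

theorem norm_pole {ι : Type*} {α : ι → ℂ} (t : ι × Bool) : ‖pole α t‖ = ‖α t.1‖ := by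
  unfold pole; split_ifs <;> simp

theorem sum_eq_factorial_smul_sum_graph {ι β M : Type*} [Fintype ι] [DecidableEq ι] [Fintype β]
    [AddCommMonoid M] (T : (ι → ι × β) → M)
    (hT0 : ∀ c, ¬ Function.Injective (Prod.fst ∘ c) → T c = 0)
    (hT : ∀ c (σ : Equiv.Perm ι), T (c ∘ σ) = T c) :
    ∑ c, T c = (Fintype.card ι).factorial • ∑ ε : ι → β, T (fun i => (i, ε i)) := by
  have hperm : ∑ q : Equiv.Perm ι × (ι → β), T ((fun i => (i, q.2 i)) ∘ q.1) = ∑ c, T c := by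
    refine sum_bij_ne_zero (fun q _ _ => (fun i => (i, q.2 i)) ∘ q.1) (fun _ _ _ => mem_univ _)
      ?_ ?_ fun _ _ _ => rfl
    · rintro ⟨σ, ε⟩ - - ⟨τ, δ⟩ - - h
      have hστ : σ = τ := Equiv.ext fun i => congrArg Prod.fst (congrFun h i)
      subst hστ
      exact Prod.ext rfl (funext fun j => by simpa using congrArg Prod.snd (congrFun h (σ.symm j)))
    · intro c _ hc
      have hbij := Finite.injective_iff_bijective.1 (not_imp_comm.1 (hT0 c) hc)
      set σ := Equiv.ofBijective _ hbij
      have hc' : (fun i => (i, (c (σ.symm i)).2)) ∘ σ = c := funext fun i => by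
        change (σ i, (c (σ.symm (σ i))).2) = c i
        rw [σ.symm_apply_apply]
        rfl
      exact ⟨(σ, fun j => (c (σ.symm j)).2), mem_univ _, by rwa [hc'], hc'⟩
  rw [← hperm, Fintype.sum_prod_type]
  simp [hT, Fintype.card_perm]

theorem DifferentiableOn.fun_finsetProd' {𝕜 E 𝔸 ι : Type*} [NontriviallyNormedField 𝕜]
    [NormedAddCommGroup E] [NormedSpace 𝕜 E] [NormedCommRing 𝔸] [NormedAlgebra 𝕜 𝔸]
    {S : Set E} {u : Finset ι} {f : ι → E → 𝔸} (hf : ∀ i ∈ u, DifferentiableOn 𝕜 (f i) S) :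
    DifferentiableOn 𝕜 (fun x => ∏ i ∈ u, f i x) S := by
  rw [← prod_fn]
  exact prod_induction f (DifferentiableOn 𝕜 · S) (fun _ _ => .mul) (differentiableOn_const 1) hf

theorem sum_fun_fin_succ {ι M : Type*} [Fintype ι] [AddCommMonoid M] {k : ℕ}
    (g : (Fin (k + 1) → ι) → M) : ∑ c, g c = ∑ c : Fin k → ι, ∑ t, g (Fin.cons t c) := by
  rw [← Fintype.sum_equiv (Fin.consEquiv fun _ => ι) _ _ fun _ => rfl,
    Fintype.sum_prod_type_right]
  rfl

theorem inv_prod_sub_eq_sum_nodalWeight {ι F : Type*} [Field F] [DecidableEq ι] {s : Finset ι}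
    {v : ι → F} (hvs : Set.InjOn v s) (hs : s.Nonempty) {x : F} (hx : ∀ i ∈ s, x ≠ v i) :
    (∏ i ∈ s, (x - v i))⁻¹ = ∑ i ∈ s, nodalWeight s v i * (x - v i)⁻¹ := by
  refine inv_eq_of_mul_eq_one_right ?_
  simpa [interpolate_one hvs hs, eval_nodal] using (eval_interpolate_not_at_node 1 hx).symm

theorem circleIntegral_mul_inv_prod_sub {ι : Type*} [DecidableEq ι] {s : Finset ι} {β : ι → ℂ}
    {r : ℝ} (hr : 0 ≤ r) (hβ : Set.InjOn β s) (hβr : ∀ t ∈ s, β t ∈ ball (0 : ℂ) r)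
    {φ : ℂ → ℂ} (hφ : DifferentiableOn ℂ φ (closedBall 0 r)) :
    ∮ z in C(0, r), φ z * (∏ t ∈ s, (z - β t))⁻¹
      = 2 * π * I * ∑ t ∈ s, nodalWeight s β t * φ (β t) := by
  rcases s.eq_empty_or_nonempty with rfl | hs
  · simpa using (hφ.mono closure_ball_subset_closedBall).diffContOnCl.circleIntegral_eq_zero hr
  have hne : ∀ z ∈ sphere (0 : ℂ) r, ∀ t ∈ s, z ≠ β t := by
    rintro z hz t ht rfl
    exact (mem_ball_zero_iff.1 (hβr t ht)).ne (mem_sphere_zero_iff_norm.1 hz)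
  have hpartial : Set.EqOn (fun z => φ z * (∏ t ∈ s, (z - β t))⁻¹)
      (fun z => ∑ t ∈ s, nodalWeight s β t * ((z - β t)⁻¹ * φ z)) (sphere 0 r) := by
    intro z hz
    simp only [inv_prod_sub_eq_sum_nodalWeight hβ hs (hne z hz), mul_sum]
    exact sum_congr rfl fun t _ => by ring
  have hint : ∀ t ∈ s, CircleIntegrable (fun z => nodalWeight s β t * ((z - β t)⁻¹ * φ z)) 0 r :=
    fun t ht => ContinuousOn.circleIntegrable hr <| continuousOn_const.mul <|
      ((continuousOn_id.sub continuousOn_const).inv₀ fun z hz => sub_ne_zero.2 (hne z hz t ht)).mul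
        (hφ.continuousOn.mono sphere_subset_closedBall)
  rw [circleIntegral.integral_congr hr hpartial, circleIntegral.integral_fun_sum hint, mul_sum]
  refine sum_congr rfl fun t ht => ?_
  have hcauchy := hφ.circleIntegral_sub_inv_smul (hβr t ht)
  simp only [smul_eq_mul] at hcauchy
  rw [circleIntegral.integral_const_mul, hcauchy]
  ring

theorem iterCircleIntegral_congr {k : ℕ} {r : ℝ} (hr : 0 ≤ r) {f g : (Fin k → ℂ) → ℂ}
    (h : ∀ z : Fin k → ℂ, (∀ i, ‖z i‖ = r) → f z = g z) :
    iterCircleIntegral k f r = iterCircleIntegral k g r := by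
  induction k with
  | zero => exact h _ finZeroElim
  | succ k ih =>
    refine circleIntegral.integral_congr hr fun z hz => ih fun v hv => h _ ?_
    exact Fin.forall_fin_succ.2 ⟨mem_sphere_zero_iff_norm.1 hz, hv⟩

theorem iterCircleIntegral_mul_prod_eq_sum {ι : Type*} [Fintype ι] {r : ℝ} (hr : 0 ≤ r)
    {Q : ℂ → ℂ} {p w : ι → ℂ} (hp : ∀ t, ‖p t‖ ≤ r) (hQ : ContinuousOn Q (sphere 0 r))
    (hres : ∀ φ : ℂ → ℂ, DifferentiableOn ℂ φ (closedBall 0 r) →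
      ∮ z in C(0, r), φ z * Q z = 2 * π * I * ∑ t, w t * φ (p t))
    {k : ℕ} {N : (Fin k → ℂ) → ℂ} (hN : DifferentiableOn ℂ N {z | ∀ i, ‖z i‖ ≤ r}) :
    iterCircleIntegral k (fun z => N z * ∏ i, Q (z i)) r
      = (2 * π * I) ^ k * ∑ c : Fin k → ι, (∏ i, w (c i)) * N (p ∘ c) := by
  induction k with
  | zero => simpa [iterCircleIntegral] using congrArg N (Subsingleton.elim _ _)
  | succ k ih =>
    have hcons : ∀ {z : ℂ} {v : Fin k → ℂ}, ‖z‖ ≤ r → (∀ i, ‖v i‖ ≤ r) →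
        ∀ i, ‖(Fin.cons z v : Fin (k + 1) → ℂ) i‖ ≤ r := fun hz hv =>
      Fin.forall_fin_succ.2 ⟨hz, hv⟩
    have hφ : ∀ c : Fin k → ι, DifferentiableOn ℂ (fun z => N (Fin.cons z (p ∘ c)))
        (closedBall 0 r) := fun c =>
      hN.comp (by fun_prop) fun z hz => hcons (mem_closedBall_zero_iff.1 hz) fun i => hp (c i)
    have hslice : Set.EqOn
        (fun z => iterCircleIntegral k
          (fun v => N (Fin.cons z v) * ∏ i, Q ((Fin.cons z v : Fin (k + 1) → ℂ) i)) r)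
        (fun z => (2 * π * I) ^ k *
          ∑ c : Fin k → ι, (∏ i, w (c i)) * (N (Fin.cons z (p ∘ c)) * Q z)) (sphere 0 r) := by
      intro z hz
      have hz : ‖z‖ ≤ r := (mem_sphere_zero_iff_norm.1 hz).le
      calc _ = iterCircleIntegral k (fun v => (N (Fin.cons z v) * Q z) * ∏ i, Q (v i)) r := by
            simp only [Fin.prod_univ_succ, Fin.cons_zero, Fin.cons_succ, mul_assoc]
        _ = _ := ih ((hN.comp (by fun_prop) fun v hv => hcons hz hv).mul_const _)
    have hint : ∀ c : Fin k → ι,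
        CircleIntegrable (fun z => (∏ i, w (c i)) * (N (Fin.cons z (p ∘ c)) * Q z)) 0 r :=
      fun c => (continuousOn_const.mul (((hφ c).continuousOn.mono sphere_subset_closedBall).mul
        hQ)).circleIntegrable hr
    calc iterCircleIntegral (k + 1) (fun z => N z * ∏ i, Q (z i)) r
        = (2 * π * I) ^ k * ∑ c : Fin k → ι,
            (∏ i, w (c i)) * ∮ z in C(0, r), N (Fin.cons z (p ∘ c)) * Q z := by
          rw [iterCircleIntegral, circleIntegral.integral_congr hr hslice,
            circleIntegral.integral_const_mul, circleIntegral.integral_fun_sum fun c _ => hint c]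
          simp only [circleIntegral.integral_const_mul]
      _ = (2 * π * I) ^ (k + 1) * ∑ c : Fin (k + 1) → ι, (∏ i, w (c i)) * N (p ∘ c) := by
          simp only [hres _ (hφ _), sum_fun_fin_succ, mul_sum, Fin.prod_univ_succ, Fin.cons_zero,
            Fin.cons_succ, Fin.comp_cons]
          exact sum_congr rfl fun c _ => sum_congr rfl fun t _ => by ring

theorem add_mem_ball_zero_two_mul {r : ℝ} {a b : ℂ} (ha : ‖a‖ < r) (hb : ‖b‖ < r) :
    a + b ∈ ball (0 : ℂ) (2 * r) := by
  rw [mem_ball_zero_iff, two_mul]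
  exact (norm_add_le _ _).trans_lt (add_lt_add ha hb)

namespace CFKRS

variable {k : ℕ}

/-- `2^k` times the integrand `K z Δ(z²)² ∏ z_i`, with the poles of `K` cancelled. -/
def numerator (F : (Fin k → ℂ) → ℂ) (h : ℂ → ℂ) (z : Fin k → ℂ) : ℂ :=
  F z * (∏ p ∈ univ.filter (fun p : Fin k × Fin k => p.1 ≤ p.2),
      (1 + (z p.1 + z p.2) * h (z p.1 + z p.2))) *
    (vandermondeProd z * vandermondeProd (z ^ 2))

variable {F : (Fin k → ℂ) → ℂ} {h : ℂ → ℂ}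

theorem numerator_eq_zero {z : Fin k → ℂ} {i j : Fin k} (hij : i ≠ j) (hz : z i ^ 2 = z j ^ 2) :
    numerator F h z = 0 := by
  simp [numerator, vandermondeProd_eq_zero (x := z ^ 2) hij hz]

theorem numerator_comp_perm (hF : ∀ σ : Equiv.Perm (Fin k), ∀ z, F (z ∘ σ) = F z)
    (σ : Equiv.Perm (Fin k)) (z : Fin k → ℂ) : numerator F h (z ∘ σ) = numerator F h z := by
  have hV : ∀ z : Fin k → ℂ, vandermondeProd z * vandermondeProd (z ^ 2)
      = ∏ p ∈ univ.filter (fun p : Fin k × Fin k => p.1 < p.2),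
          (z p.2 - z p.1) * (z p.2 ^ 2 - z p.1 ^ 2) := fun z =>
    prod_mul_distrib.symm
  simp only [numerator, hV, hF, Function.comp_apply]
  rw [prod_filter_le_comp_perm (ψ := fun a b => 1 + (z a + z b) * h (z a + z b))
      (fun a b => by simp only [add_comm]) σ,
    prod_filter_lt_comp_perm (ψ := fun a b => (z b - z a) * (z b ^ 2 - z a ^ 2))
      (fun a b => by ring) σ]

theorem differentiableOn_numerator {r : ℝ}
    (hF : DifferentiableOn ℂ F {z : Fin k → ℂ | ∀ i, ‖z i‖ < r})
    (hh : DifferentiableOn ℂ h (ball (0 : ℂ) (2 * r))) :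
    DifferentiableOn ℂ (numerator F h) {z : Fin k → ℂ | ∀ i, ‖z i‖ < r} := by
  refine (hF.mul (DifferentiableOn.fun_finsetProd' fun p _ => ?_)).mul
    (Differentiable.differentiableOn (by unfold vandermondeProd; fun_prop))
  exact (differentiableOn_const 1).add
    ((by fun_prop : Differentiable ℂ fun z : Fin k → ℂ => z p.1 + z p.2).differentiableOn.mul
      (hh.comp (by fun_prop) fun z hz => add_mem_ball_zero_two_mul (hz p.1) (hz p.2)))

variable {r : ℝ} {f : ℂ → ℂ} {K : (Fin k → ℂ) → ℂ}

theorem two_pow_mul_eq_numerator (hfh : ∀ s ∈ ball (0 : ℂ) (2 * r), s ≠ 0 → f s = 1 / s + h s)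
    (hK : ∀ z : Fin k → ℂ,
      K z = F z * ∏ p ∈ univ.filter (fun p : Fin k × Fin k => p.1 ≤ p.2), f (z p.1 + z p.2))
    {z : Fin k → ℂ} (hz : ∀ i, z i ≠ 0 ∧ ‖z i‖ < r) :
    2 ^ k * (K z * vandermondeProd (z ^ 2) ^ 2 * ∏ i, z i) = numerator F h z := by
  -- where some `z i + z j` vanishes, `f` is unconstrained, but `Δ(z²) = 0` kills both sides
  by_cases hsq : ∃ i j, i ≠ j ∧ z i ^ 2 = z j ^ 2
  · obtain ⟨i, j, hij, hzij⟩ := hsq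
    simp [numerator_eq_zero hij hzij, vandermondeProd_eq_zero (x := z ^ 2) hij hzij]
  push Not at hsq
  have hne : ∀ p ∈ univ.filter (fun p : Fin k × Fin k => p.1 ≤ p.2), z p.1 + z p.2 ≠ 0 := by
    intro p hp hzero
    rcases (mem_filter.1 hp).2.eq_or_lt with heq | hlt
    · rw [← heq, ← two_mul] at hzero
      exact (hz p.1).1 ((mul_eq_zero.1 hzero).resolve_left two_ne_zero)
    · exact hsq p.1 p.2 hlt.ne (by linear_combination (z p.1 - z p.2) * hzero)
  have hf : ∀ p ∈ univ.filter (fun p : Fin k × Fin k => p.1 ≤ p.2),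
      f (z p.1 + z p.2) * (z p.1 + z p.2) = 1 + (z p.1 + z p.2) * h (z p.1 + z p.2) := by
    intro p hp
    rw [hfh _ (add_mem_ball_zero_two_mul (hz p.1).2 (hz p.2).2) (hne p hp)]
    field_simp [hne p hp]
  calc 2 ^ k * (K z * vandermondeProd (z ^ 2) ^ 2 * ∏ i, z i)
      = K z * ((∏ p ∈ univ.filter (fun p : Fin k × Fin k => p.1 ≤ p.2), (z p.1 + z p.2)) *
          (vandermondeProd z * vandermondeProd (z ^ 2))) := by
        rw [prod_filter_le_add_mul_vandermondeProd, Fintype.card_fin]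
        ring
    _ = numerator F h z := by
        rw [hK, numerator, ← prod_congr rfl hf, prod_mul_distrib]
        ring

theorem integrand_eq_on_torus {r' : ℝ} (hr : 0 < r) (hrr' : r < r')
    (hfh : ∀ s ∈ ball (0 : ℂ) (2 * r'), s ≠ 0 → f s = 1 / s + h s)
    (hK : ∀ z : Fin k → ℂ,
      K z = F z * ∏ p ∈ univ.filter (fun p : Fin k × Fin k => p.1 ≤ p.2), f (z p.1 + z p.2))
    (α : Fin k → ℂ) {z : Fin k → ℂ} (hz : ∀ i, ‖z i‖ = r) :
    K z * (∏ p ∈ univ.filter (fun p : Fin k × Fin k => p.1 < p.2),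
        (z p.2 ^ 2 - z p.1 ^ 2)) ^ 2 * (∏ i, z i) / ∏ i, ∏ j, ((z i - α j) * (z i + α j))
      = (2 ^ k)⁻¹ * numerator F h z * ∏ i, (∏ t, (z i - pole α t))⁻¹ := by
  have hz' : ∀ i, z i ≠ 0 ∧ ‖z i‖ < r' := fun i =>
    ⟨norm_ne_zero_iff.1 (by rw [hz i]; exact hr.ne'), (hz i).trans_lt hrr'⟩
  rw [← two_pow_mul_eq_numerator hfh hK hz', inv_mul_cancel_left₀ (by simp), prod_inv_distrib,
    div_eq_mul_inv]
  simp only [prod_sub_pole]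
  rfl

variable {α : Fin k → ℂ}

theorem prod_nodalWeight_mul_numerator_pole
    (hfh : ∀ s ∈ ball (0 : ℂ) (2 * r), s ≠ 0 → f s = 1 / s + h s)
    (hK : ∀ z : Fin k → ℂ,
      K z = F z * ∏ p ∈ univ.filter (fun p : Fin k × Fin k => p.1 ≤ p.2), f (z p.1 + z p.2))
    (hα : ∀ j, 0 < ‖α j‖ ∧ ‖α j‖ < r) (hα' : ∀ i j, i ≠ j → α i + α j ≠ 0 ∧ α i - α j ≠ 0)
    (ε : Fin k → Bool) :
    (∏ j, nodalWeight univ (pole α) (j, ε j)) *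
        ((2 ^ k)⁻¹ * numerator F h (pole α ∘ fun i => (i, ε i)))
      = (-1) ^ (k * (k - 1) / 2) * (2 ^ k)⁻¹ * K (fun i => pole α (i, ε i)) := by
  set v : Fin k → ℂ := fun i => pole α (i, ε i)
  have hv : ∀ i, v i ≠ 0 ∧ ‖v i‖ < r := fun i =>
    ⟨pole_ne_zero (fun j => norm_pos_iff.1 (hα j).1) _, by simpa only [v, norm_pole] using (hα i).2⟩
  have hV : vandermondeProd (fun j => α j ^ 2) ≠ 0 := vandermondeProd_ne_zero fun i j hij => by
    by_contra hne
    exact mul_ne_zero (hα' i j hne).2 (hα' i j hne).1 (by linear_combination hij)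
  have hP : ∏ i, v i ≠ 0 := prod_ne_zero_iff.2 fun i _ => (hv i).1
  rw [prod_nodalWeight_pole, Fintype.card_fin, Nat.choose_two_right]
  change _ * ((2 ^ k)⁻¹ * numerator F h v) = _
  rw [← two_pow_mul_eq_numerator hfh hK hv,
    show v ^ 2 = fun j => α j ^ 2 from funext fun j => pole_sq (j, ε j)]
  have hsign : ((-1 : ℂ) ^ (k * (k - 1) / 2)) ^ 2 = 1 := by simp [neg_one_pow_eq_or]
  field_simp
  rw [hsign, one_mul, mul_div_assoc, div_self hP, mul_one]

theorem sum_nodalWeight_mul_numerator_pole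
    (hFsym : ∀ σ : Equiv.Perm (Fin k), ∀ z : Fin k → ℂ, F (z ∘ σ) = F z)
    (hfh : ∀ s ∈ ball (0 : ℂ) (2 * r), s ≠ 0 → f s = 1 / s + h s)
    (hK : ∀ z : Fin k → ℂ,
      K z = F z * ∏ p ∈ univ.filter (fun p : Fin k × Fin k => p.1 ≤ p.2), f (z p.1 + z p.2))
    (hα : ∀ j, 0 < ‖α j‖ ∧ ‖α j‖ < r) (hα' : ∀ i j, i ≠ j → α i + α j ≠ 0 ∧ α i - α j ≠ 0) :
    ∑ c : Fin k → Fin k × Bool,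
        (∏ i, nodalWeight univ (pole α) (c i)) * ((2 ^ k)⁻¹ * numerator F h (pole α ∘ c))
      = k.factorial * ((-1) ^ (k * (k - 1) / 2) * (2 ^ k)⁻¹ *
          ∑ ε : Fin k → Bool, K (fun i => pole α (i, ε i))) := by
  rw [sum_eq_factorial_smul_sum_graph _ ?vanish ?perm, Fintype.card_fin, nsmul_eq_mul]
  · simp only [prod_nodalWeight_mul_numerator_pole hfh hK hα hα', ← mul_sum]
  case vanish =>
    intro c hc
    obtain ⟨i, j, hij, hne⟩ := Function.not_injective_iff.1 hc
    rw [numerator_eq_zero (z := pole α ∘ c) hne (by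
      simpa only [Function.comp_apply, pole_sq] using congrArg (fun a => α a ^ 2) hij),
      mul_zero, mul_zero]
  case perm =>
    intro c σ
    rw [show pole α ∘ (c ∘ σ) = (pole α ∘ c) ∘ σ from rfl, numerator_comp_perm hFsym]
    simp only [Function.comp_apply, Equiv.prod_comp σ fun i => nodalWeight univ (pole α) (c i)]

end CFKRS

theorem cfkrs_contour_lemma_general (k : ℕ) (r r' : ℝ) (hr : 0 < r) (hrr' : r < r')
    (F : (Fin k → ℂ) → ℂ)
    (hF : DifferentiableOn ℂ F {z : Fin k → ℂ | ∀ i, ‖z i‖ < r'})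
    (hFsym : ∀ σ : Equiv.Perm (Fin k), ∀ z : Fin k → ℂ, F (z ∘ σ) = F z)
    (f h : ℂ → ℂ)
    (hh : DifferentiableOn ℂ h (Metric.ball (0 : ℂ) (2 * r')))
    (hfh : ∀ s ∈ Metric.ball (0 : ℂ) (2 * r'), s ≠ 0 → f s = 1 / s + h s)
    (α : Fin k → ℂ)
    (hα : ∀ j, 0 < ‖α j‖ ∧ ‖α j‖ < r)
    (hα' : ∀ i j, i ≠ j → α i + α j ≠ 0 ∧ α i - α j ≠ 0)
    (K : (Fin k → ℂ) → ℂ)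
    (hK : ∀ z : Fin k → ℂ,
      K z = F z * ∏ p ∈ univ.filter (fun p : Fin k × Fin k => p.1 ≤ p.2), f (z p.1 + z p.2)) :
    (∑ ε : Fin k → Bool, K (fun i => if ε i then α i else -α i))
      = ((-1 : ℂ) ^ (k * (k - 1) / 2) * 2 ^ k) /
          ((Nat.factorial k : ℂ) * (2 * Real.pi * Complex.I) ^ k) *
        iterCircleIntegral k
          (fun z =>
            K z * (∏ p ∈ univ.filter (fun p : Fin k × Fin k => p.1 < p.2),
                (z p.2 ^ 2 - z p.1 ^ 2)) ^ 2 * (∏ i, z i)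
              / ∏ i, ∏ j, ((z i - α j) * (z i + α j))) r := by
  have hβ : Function.Injective (pole α) := pole_injective (fun j => norm_pos_iff.1 (hα j).1) hα'
  have hβr : ∀ t, pole α t ∈ ball (0 : ℂ) r := fun t => by
    rw [mem_ball_zero_iff, norm_pole]; exact (hα t.1).2
  have hQ : ContinuousOn (fun z => (∏ t, (z - pole α t))⁻¹) (sphere 0 r) :=
    ContinuousOn.inv₀ (by fun_prop) fun z hz => prod_ne_zero_iff.2 fun t _ => sub_ne_zero.2
      fun he => (mem_ball_zero_iff.1 (hβr t)).ne (he ▸ mem_sphere_zero_iff_norm.1 hz)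
  have hN : DifferentiableOn ℂ (fun z => (2 ^ k)⁻¹ * CFKRS.numerator F h z)
      {z | ∀ i, ‖z i‖ ≤ r} :=
    ((CFKRS.differentiableOn_numerator hF hh).mono fun z hz i => (hz i).trans_lt hrr').const_mul _
  rw [iterCircleIntegral_congr hr.le fun z hz => CFKRS.integrand_eq_on_torus hr hrr' hfh hK α hz,
    iterCircleIntegral_mul_prod_eq_sum hr.le (fun t => (mem_ball_zero_iff.1 (hβr t)).le) hQ
      (fun φ hφ => circleIntegral_mul_inv_prod_sub hr.le hβ.injOn (fun t _ => hβr t) hφ) hN,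
    CFKRS.sum_nodalWeight_mul_numerator_pole hFsym hfh hK
      (fun j => ⟨(hα j).1, (hα j).2.trans hrr'⟩) hα']
  have hπ : (2 * π * I : ℂ) ≠ 0 := by simp [Real.pi_ne_zero, I_ne_zero]
  have hsign : ((-1 : ℂ) ^ (k * (k - 1) / 2)) ^ 2 = 1 := by simp [neg_one_pow_eq_or]
  field_simp
  rw [hsign, one_mul, mul_div_cancel_left₀ _ (Nat.cast_ne_zero.2 k.factorial_ne_zero)]
  rfl

/-- CFKRS Lemma 2.5.2, unsigned version: for a symmetric holomorphic
`F` on a polydisc of radius `r' > r`, a function `f` holomorphic on the punctured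
disc `0 < |s| < 2r'` with a simple pole of residue `1` at `s = 0`
(i.e. `f(s) = 1/s + h(s)` with `h` holomorphic on `|s| < 2r'`), and
`K(z) = F(z) ∏_{i ≤ j} f(z_i + z_j)`, for `α_j` with `0 < |α_j| < r` and
`α_i ± α_j ≠ 0` for `i ≠ j`, the sum of `K(ε_1 α_1, …, ε_k α_k)` over sign
vectors `ε ∈ {−1,1}^k` equals the stated `k`-fold contour integral. -/
theorem cfkrs_contour_lemma (k : ℕ) (hk : 1 ≤ k) (r r' : ℝ) (hr : 0 < r) (hrr' : r < r')
    (F : (Fin k → ℂ) → ℂ)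
    (hF : DifferentiableOn ℂ F {z : Fin k → ℂ | ∀ i, ‖z i‖ < r'})
    (hFsym : ∀ σ : Equiv.Perm (Fin k), ∀ z : Fin k → ℂ, F (z ∘ σ) = F z)
    (f h : ℂ → ℂ)
    (hh : DifferentiableOn ℂ h (Metric.ball (0 : ℂ) (2 * r')))
    (hfh : ∀ s ∈ Metric.ball (0 : ℂ) (2 * r'), s ≠ 0 → f s = 1 / s + h s)
    (α : Fin k → ℂ)
    (hα : ∀ j, 0 < ‖α j‖ ∧ ‖α j‖ < r)
    (hα' : ∀ i j, i ≠ j → α i + α j ≠ 0 ∧ α i - α j ≠ 0)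
    (K : (Fin k → ℂ) → ℂ)
    (hK : ∀ z : Fin k → ℂ,
      K z = F z * ∏ p ∈ univ.filter (fun p : Fin k × Fin k => p.1 ≤ p.2), f (z p.1 + z p.2)) :
    (∑ ε : Fin k → Bool, K (fun i => if ε i then α i else -α i))
      = ((-1 : ℂ) ^ (k * (k - 1) / 2) * 2 ^ k) /
          ((Nat.factorial k : ℂ) * (2 * Real.pi * Complex.I) ^ k) *
        iterCircleIntegral k
          (fun z =>
            K z * (∏ p ∈ univ.filter (fun p : Fin k × Fin k => p.1 < p.2),
                (z p.2 ^ 2 - z p.1 ^ 2)) ^ 2 * (∏ i, z i)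
              / ∏ i, ∏ j, ((z i - α j) * (z i + α j))) r :=
  cfkrs_contour_lemma_general k r r' hr hrr' F hF hFsym f h hh hfh α hα hα' K hK
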